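/- With f and g as in the previous example on ℝ³, the adjoint path p(t) ≡ (0, −2, 1) along the trajectory x̄(t) = (0, 0, −4 + t) satisfies p(t)·[f,g](x̄(t)) = 0 for all t, while min{ p(t)·v : v ∈ [g,[f,g]]_set(x̄(t)) } = 4 > 0; hence the step-3 nonsmooth Legendre–Clebsch necessary condition 0 ≥ min{ p(t)·[g,[f,g]]_set(x̄(t)) } fails. -/

import Mathlib

open Set Filter Topology

/-- The pointwise Lie bracket `[X,Y] = DY·X − DX·Y` on ℝ³ = ℝ×ℝ×ℝ. -/
noncomputable def lieBracket (X Y : ℝ × ℝ × ℝ → ℝ × ℝ × ℝ) :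
    ℝ × ℝ × ℝ → ℝ × ℝ × ℝ :=
  fun x => fderiv ℝ Y x (X x) - fderiv ℝ X x (Y x)

/-- The step-3 set-valued bracket `[Z,[X,Y]]_set`. -/
noncomputable def setLieBracket3 (X Y Z : ℝ × ℝ × ℝ → ℝ × ℝ × ℝ) (x : ℝ × ℝ × ℝ) :
    Set (ℝ × ℝ × ℝ) :=
  convexHull ℝ {v | ∃ u w : ℕ → ℝ × ℝ × ℝ,
    (∀ k, DifferentiableAt ℝ (lieBracket X Y) (u k)) ∧
    (∀ k, DifferentiableAt ℝ Z (w k)) ∧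
    Tendsto u atTop (𝓝 x) ∧ Tendsto w atTop (𝓝 x) ∧
    Tendsto (fun k =>
      fderiv ℝ (lieBracket X Y) (u k) (Z (w k)) -
      fderiv ℝ Z (w k) (lieBracket X Y (u k))) atTop (𝓝 v)}

noncomputable def fEx : ℝ × ℝ × ℝ → ℝ × ℝ × ℝ :=
  fun x => (0, (if x.1 < 0 then (3/2) * x.1^2 else x.1^2, 1))

def gEx : ℝ × ℝ × ℝ → ℝ × ℝ × ℝ := fun _ => (1, (0, 0))

/-- The constant adjoint covector `p = (0, −2, 1)` acting on ℝ³. -/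
def pEx (v : ℝ × ℝ × ℝ) : ℝ := 0 * v.1 + (-2) * v.2.1 + 1 * v.2.2

/-- The reference trajectory `x̄(t) = (0, 0, −4 + t)`. -/
def xbar (t : ℝ) : ℝ × ℝ × ℝ := (0, (0, -4 + t))

/-! `[f,g] = (0, ψ(x¹), 0)` with `ψ(s) = -3s` for `s < 0` and `ψ(s) = -2s` for `s ≥ 0`. So `[f,g]`
vanishes on the plane `x¹ = 0`, is differentiable exactly off it, and there `D[f,g]·g` is `-3∂₂` or
`-2∂₂`, on which `p` takes the values `6` and `4`. The half-space `{p·v ≥ 4}` is closed and convex,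
so it contains `[g,[f,g]]_set`, and the value `4` is attained by approaching the plane from `x¹ > 0`. -/

section PiecewiseDeriv

variable {E : Type*} [NormedAddCommGroup E] [NormedSpace ℝ E] {f g : ℝ → E} {f' g' : E} {x : ℝ}

theorem HasDerivAt.ite_lt_zero_of_neg (hf : HasDerivAt f f' x) (hx : x < 0) :
    HasDerivAt (fun s => if s < 0 then f s else g s) f' x :=
  hf.congr_of_eventuallyEq <| (eventually_lt_nhds hx).mono fun _ hs => if_pos hs

theorem HasDerivAt.ite_lt_zero_of_pos (hg : HasDerivAt g g' x) (hx : 0 < x) :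
    HasDerivAt (fun s => if s < 0 then f s else g s) g' x :=
  hg.congr_of_eventuallyEq <| (eventually_gt_nhds hx).mono fun _ hs => if_neg hs.not_gt

theorem HasDerivAt.ite_lt_zero_at_zero (hf : HasDerivAt f f' 0) (hg : HasDerivAt g f' 0)
    (h0 : f 0 = g 0) : HasDerivAt (fun s => if s < 0 then f s else g s) f' 0 := by
  have hl : HasDerivWithinAt (fun s => if s < 0 then f s else g s) f' (Iic 0) 0 := by
    refine hf.hasDerivWithinAt.congr (fun s hs => ?_) (by simp [h0])
    rcases (mem_Iic.1 hs).lt_or_eq with hs | rfl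
    · simp [hs]
    · simp [h0]
  have hr : HasDerivWithinAt (fun s => if s < 0 then f s else g s) f' (Ici 0) 0 :=
    hg.hasDerivWithinAt.congr (fun s hs => if_neg (not_lt.2 hs)) (by simp)
  simpa [Iic_union_Ici] using hl.union hr

end PiecewiseDeriv

theorem not_differentiableAt_ite_lt_zero_mul {a b : ℝ} (hab : a ≠ b) :
    ¬ DifferentiableAt ℝ (fun s : ℝ => if s < 0 then a * s else b * s) 0 := by
  intro h
  have hba : b - a ≠ 0 := sub_ne_zero.2 hab.symm
  have habs : (abs : ℝ → ℝ) =
      fun s => 2 / (b - a) * ((if s < 0 then a * s else b * s) - (a + b) / 2 * s) := by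
    funext s
    split_ifs with hs
    · rw [abs_of_neg hs]; field_simp; ring
    · rw [abs_of_nonneg (not_lt.1 hs)]; field_simp; ring
  exact not_differentiableAt_abs_zero (habs ▸ (h.sub (differentiableAt_id.const_mul _)).const_mul _)

theorem hasFDerivAt_mk_comp_fst {h : ℝ → ℝ} {h' : ℝ} {x : ℝ × ℝ × ℝ} (a b : ℝ)
    (hh : HasDerivAt h h' x.1) :
    HasFDerivAt (fun y : ℝ × ℝ × ℝ => (a, h y.1, b))
      ((ContinuousLinearMap.fst ℝ ℝ (ℝ × ℝ)).smulRight (0, h', 0)) x := by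
  refine ((hasFDerivAt_const a x).prodMk
    ((hh.comp_hasFDerivAt x hasFDerivAt_fst).prodMk (hasFDerivAt_const b x))).congr_fderiv ?_
  ext <;> simp

theorem lieBracket_const_right (X : ℝ × ℝ × ℝ → ℝ × ℝ × ℝ) (y : ℝ × ℝ × ℝ) :
    lieBracket X (fun _ => y) = fun x => -fderiv ℝ X x y := by
  funext x
  simp [lieBracket]

theorem setLieBracket3_subset {X Y Z : ℝ × ℝ × ℝ → ℝ × ℝ × ℝ} {x : ℝ × ℝ × ℝ}
    {S : Set (ℝ × ℝ × ℝ)} (hS : IsClosed S) (hSc : Convex ℝ S)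
    (h : ∀ u w, DifferentiableAt ℝ (lieBracket X Y) u → DifferentiableAt ℝ Z w →
      fderiv ℝ (lieBracket X Y) u (Z w) - fderiv ℝ Z w (lieBracket X Y u) ∈ S) :
    setLieBracket3 X Y Z x ⊆ S :=
  convexHull_min (fun _ ⟨_, _, hu, hw, _, _, hv⟩ =>
    hS.mem_of_tendsto hv (Eventually.of_forall fun k => h _ _ (hu k) (hw k))) hSc

theorem hasDerivAt_ite_lt_zero_sq (s : ℝ) :
    HasDerivAt (fun s : ℝ => if s < 0 then (3/2) * s^2 else s^2)
      (if s < 0 then 3 * s else 2 * s) s := by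
  have hf (s : ℝ) : HasDerivAt (fun s : ℝ => (3/2) * s^2) (3 * s) s := by
    simpa [mul_assoc] using ((hasDerivAt_pow 2 s).const_mul (3/2 : ℝ)).congr_deriv (by ring)
  have hg (s : ℝ) : HasDerivAt (fun s : ℝ => s^2) (2 * s) s := by
    simpa using hasDerivAt_pow 2 s
  rcases lt_trichotomy s 0 with hs | rfl | hs
  · simpa [hs] using (hf s).ite_lt_zero_of_neg hs
  · simpa using (hf 0).ite_lt_zero_at_zero (by simpa using hg 0) (by simp)
  · simpa [hs.not_gt] using (hg s).ite_lt_zero_of_pos hs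

theorem hasFDerivAt_fEx (x : ℝ × ℝ × ℝ) :
    HasFDerivAt fEx ((ContinuousLinearMap.fst ℝ ℝ (ℝ × ℝ)).smulRight
      (0, if x.1 < 0 then 3 * x.1 else 2 * x.1, 0)) x :=
  hasFDerivAt_mk_comp_fst 0 1 (hasDerivAt_ite_lt_zero_sq x.1)

theorem lieBracket_fEx_gEx :
    lieBracket fEx gEx = fun x => (0, if x.1 < 0 then -3 * x.1 else -2 * x.1, 0) := by
  refine (lieBracket_const_right fEx (1, 0, 0)).trans (funext fun x => ?_)
  rw [(hasFDerivAt_fEx x).fderiv]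
  split_ifs <;> simp

theorem hasFDerivAt_lieBracket_fEx_gEx_of_neg {x : ℝ × ℝ × ℝ} (hx : x.1 < 0) :
    HasFDerivAt (lieBracket fEx gEx)
      ((ContinuousLinearMap.fst ℝ ℝ (ℝ × ℝ)).smulRight (0, -3, 0)) x := by
  rw [lieBracket_fEx_gEx]
  exact hasFDerivAt_mk_comp_fst 0 0 ((hasDerivAt_id x.1).const_mul (-3) |>.congr_deriv (mul_one _)
    |>.ite_lt_zero_of_neg hx)

theorem hasFDerivAt_lieBracket_fEx_gEx_of_pos {x : ℝ × ℝ × ℝ} (hx : 0 < x.1) :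
    HasFDerivAt (lieBracket fEx gEx)
      ((ContinuousLinearMap.fst ℝ ℝ (ℝ × ℝ)).smulRight (0, -2, 0)) x := by
  rw [lieBracket_fEx_gEx]
  exact hasFDerivAt_mk_comp_fst 0 0 ((hasDerivAt_id x.1).const_mul (-2) |>.congr_deriv (mul_one _)
    |>.ite_lt_zero_of_pos hx)

theorem not_differentiableAt_lieBracket_fEx_gEx {x : ℝ × ℝ × ℝ} (hx : x.1 = 0) :
    ¬ DifferentiableAt ℝ (lieBracket fEx gEx) x := by
  intro h
  obtain ⟨x₁, y⟩ := x
  subst hx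
  have hline : DifferentiableAt ℝ (fun s : ℝ => (s, y)) 0 :=
    differentiableAt_id.prodMk (differentiableAt_const _)
  refine not_differentiableAt_ite_lt_zero_mul (a := -3) (b := -2) (by norm_num) ?_
  simpa [lieBracket_fEx_gEx] using (h.comp (0 : ℝ) hline).snd.fst

theorem fderiv_lieBracket_fEx_gEx_apply {u : ℝ × ℝ × ℝ}
    (hu : DifferentiableAt ℝ (lieBracket fEx gEx) u) :
    fderiv ℝ (lieBracket fEx gEx) u (1, 0, 0) = (0, -3, 0) ∨
      fderiv ℝ (lieBracket fEx gEx) u (1, 0, 0) = (0, -2, 0) := by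
  have hu₁ : u.1 ≠ 0 := fun h => not_differentiableAt_lieBracket_fEx_gEx h hu
  rcases hu₁.lt_or_gt with h | h
  · left; simp [(hasFDerivAt_lieBracket_fEx_gEx_of_neg h).fderiv]
  · right; simp [(hasFDerivAt_lieBracket_fEx_gEx_of_pos h).fderiv]

theorem fderiv_gEx (x : ℝ × ℝ × ℝ) : fderiv ℝ gEx x = 0 :=
  fderiv_const_apply _

theorem setLieBracket3_subset_four_le_pEx (x : ℝ × ℝ × ℝ) :
    setLieBracket3 fEx gEx gEx x ⊆ {v | 4 ≤ pEx v} := by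
  have hlin : IsLinearMap ℝ pEx :=
    ⟨fun v w => by simp only [pEx, Prod.fst_add, Prod.snd_add]; ring,
      fun c v => by simp only [pEx, Prod.smul_fst, Prod.smul_snd, smul_eq_mul]; ring⟩
  have hcont : Continuous pEx := by unfold pEx; fun_prop
  refine setLieBracket3_subset (isClosed_le continuous_const hcont)
    (convex_halfSpace_ge hlin 4) fun u w hu _ => ?_
  rcases fderiv_lieBracket_fEx_gEx_apply hu with h | h <;>
    simp only [fderiv_gEx, gEx, h, zero_apply, sub_zero] <;> norm_num [pEx]

theorem isLeast_pEx_setLieBracket3 {x : ℝ × ℝ × ℝ} (hx : 0 ≤ x.1) :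
    IsLeast {r : ℝ | ∃ v ∈ setLieBracket3 fEx gEx gEx x, r = pEx v} 4 := by
  refine ⟨⟨(0, -2, 0), subset_convexHull ℝ _ ?_, by norm_num [pEx]⟩,
    fun r ⟨v, hv, hr⟩ => hr ▸ setLieBracket3_subset_four_le_pEx x hv⟩
  -- approach `x` from the side `x¹ > 0`, where `[f,g]` is linear in `x¹` with slope `-2`
  set u : ℕ → ℝ × ℝ × ℝ := fun k => x + (1 / (k + 1 : ℝ)) • (1, 0, 0)
  have hu_pos (k : ℕ) : 0 < (u k).1 := by simp [u]; positivity
  refine ⟨u, fun _ => x,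
    fun k => (hasFDerivAt_lieBracket_fEx_gEx_of_pos (hu_pos k)).differentiableAt,
    fun _ => differentiableAt_const _, ?_, tendsto_const_nhds, ?_⟩
  · simpa [u] using ((tendsto_one_div_add_atTop_nhds_zero_nat (𝕜 := ℝ)).smul_const
      ((1, 0, 0) : ℝ × ℝ × ℝ)).const_add x
  · refine tendsto_const_nhds.congr fun k => ?_
    simp [(hasFDerivAt_lieBracket_fEx_gEx_of_pos (hu_pos k)).fderiv, fderiv_gEx, gEx]

theorem stmt_14 :
    (∀ t ∈ Icc (0:ℝ) 4, pEx (lieBracket fEx gEx (xbar t)) = 0) ∧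
    (∀ t ∈ Icc (0:ℝ) 4,
      IsLeast {r : ℝ | ∃ v ∈ setLieBracket3 fEx gEx gEx (xbar t), r = pEx v} 4) ∧
    (∀ t ∈ Icc (0:ℝ) 4,
      ¬ (0 ≥ sInf {r : ℝ | ∃ v ∈ setLieBracket3 fEx gEx gEx (xbar t), r = pEx v})) := by
  refine ⟨fun t _ => ?_, fun t _ => isLeast_pEx_setLieBracket3 le_rfl, fun t _ => ?_⟩
  · simp [lieBracket_fEx_gEx, xbar, pEx]
  · rw [(isLeast_pEx_setLieBracket3 le_rfl).csInf_eq]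
    norm_num
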